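/- The Van Lint–Schrijver graph on GF(25) (vertices GF(25), with x ~ y iff x − y is a nonzero cube) is isomorphic to the 5×5 rook's graph, i.e., the Hamming graph H(2,5): the graph with vertex set Δ×Δ for a 5-element set Δ, in which two distinct vertices are adjacent iff they agree in exactly one coordinate. -/
import Mathlib


/-- Van Lint–Schrijver adjacency on a field: `x ~ y` iff `x - y` is a nonzero cube. -/
def vlsAdj {F : Type*} [Field F] (x y : F) : Prop :=
  x ≠ y ∧ ∃ z : F, z ≠ 0 ∧ x - y = z ^ 3

/-- Adjacency of the Hamming graph `H(2, Δ)` (rook's graph): two distinct vertices of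
`Δ × Δ` are adjacent iff they agree in exactly one coordinate. -/
def hammingAdj {Δ : Type*} (u v : Δ × Δ) : Prop :=
  u ≠ v ∧ ((u.1 = v.1 ∧ u.2 ≠ v.2) ∨ (u.1 ≠ v.1 ∧ u.2 = v.2))

instance : Fact (Nat.Prime 5) := ⟨by norm_num⟩

/-- A concrete model of `GF(25)`: `GF(5)[x]/(x² - 2)`. -/
@[ext]
structure GF25 where
  a : ZMod 5
  b : ZMod 5
deriving DecidableEq, Fintype

namespace GF25

instance : Zero GF25 := ⟨⟨0, 0⟩⟩
instance : One GF25 := ⟨⟨1, 0⟩⟩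
instance : Add GF25 := ⟨fun x y => ⟨x.a + y.a, x.b + y.b⟩⟩
instance : Neg GF25 := ⟨fun x => ⟨-x.a, -x.b⟩⟩
instance : Mul GF25 := ⟨fun x y => ⟨x.a * y.a + 2 * x.b * y.b, x.a * y.b + x.b * y.a⟩⟩

lemma zero_def : (0 : GF25) = ⟨0, 0⟩ := rfl
lemma one_def : (1 : GF25) = ⟨1, 0⟩ := rfl
lemma add_def (x y : GF25) : x + y = ⟨x.a + y.a, x.b + y.b⟩ := rfl
lemma neg_def (x : GF25) : -x = ⟨-x.a, -x.b⟩ := rfl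
lemma mul_def (x y : GF25) : x * y = ⟨x.a * y.a + 2 * x.b * y.b, x.a * y.b + x.b * y.a⟩ := rfl

private lemma add_assoc' (x y z : GF25) : x + y + z = x + (y + z) := by
  ext <;> simp [add_def] <;> ring
private lemma zero_add' (x : GF25) : 0 + x = x := by ext <;> simp [add_def, zero_def]
private lemma add_zero' (x : GF25) : x + 0 = x := by ext <;> simp [add_def, zero_def]
private lemma add_comm' (x y : GF25) : x + y = y + x := by ext <;> simp [add_def] <;> ring
private lemma neg_add_cancel' (x : GF25) : -x + x = 0 := by
  ext <;> simp [add_def, neg_def, zero_def]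
private lemma mul_assoc' (x y z : GF25) : x * y * z = x * (y * z) := by
  ext <;> simp [mul_def] <;> ring
private lemma one_mul' (x : GF25) : 1 * x = x := by ext <;> simp [mul_def, one_def]
private lemma mul_one' (x : GF25) : x * 1 = x := by ext <;> simp [mul_def, one_def]
private lemma mul_comm' (x y : GF25) : x * y = y * x := by ext <;> simp [mul_def] <;> ring
private lemma left_distrib' (x y z : GF25) : x * (y + z) = x * y + x * z := by
  ext <;> simp [mul_def, add_def] <;> ring
private lemma right_distrib' (x y z : GF25) : (x + y) * z = x * z + y * z := by
  ext <;> simp [mul_def, add_def] <;> ring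
private lemma zero_mul' (x : GF25) : 0 * x = 0 := by ext <;> simp [mul_def, zero_def]
private lemma mul_zero' (x : GF25) : x * 0 = 0 := by ext <;> simp [mul_def, zero_def]

instance commRing : CommRing GF25 where
  zero := 0
  one := 1
  add := (· + ·)
  mul := (· * ·)
  neg := (- ·)
  add_assoc := add_assoc'
  zero_add := zero_add'
  add_zero := add_zero'
  add_comm := add_comm'
  neg_add_cancel := neg_add_cancel'
  mul_assoc := mul_assoc'
  one_mul := one_mul'
  mul_one := mul_one'
  mul_comm := mul_comm'
  left_distrib := left_distrib'
  right_distrib := right_distrib'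
  zero_mul := zero_mul'
  mul_zero := mul_zero'
  nsmul := nsmulRec
  zsmul := zsmulRec

instance : Inv GF25 :=
  ⟨fun x => ⟨x.a / (x.a ^ 2 - 2 * x.b ^ 2), -x.b / (x.a ^ 2 - 2 * x.b ^ 2)⟩⟩

lemma inv_def (x : GF25) :
    x⁻¹ = ⟨x.a / (x.a ^ 2 - 2 * x.b ^ 2), -x.b / (x.a ^ 2 - 2 * x.b ^ 2)⟩ := rfl

lemma sq_ne_two (t : ZMod 5) : t ^ 2 ≠ 2 := by revert t; decide

private lemma mul_inv_cancel' (x : GF25) (hx : x ≠ 0) : x * x⁻¹ = 1 := by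
  have hd : x.a ^ 2 - 2 * x.b ^ 2 ≠ 0 := by
    intro h
    apply hx
    by_cases hb : x.b = 0
    · have ha : x.a = 0 := by
        have h2 : x.a ^ 2 = 0 := by rw [hb] at h; simpa using h
        exact pow_eq_zero_iff (n := 2) (by norm_num) |>.mp h2
      ext <;> simp [ha, hb, zero_def]
    · exfalso
      apply sq_ne_two (x.a / x.b)
      field_simp
      linear_combination h
  ext <;> simp [mul_def, inv_def, one_def] <;> field_simp <;> ring

instance field : Field GF25 :=
  { GF25.commRing with
    inv := (·⁻¹)
    mul_inv_cancel := mul_inv_cancel'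
    inv_zero := by ext <;> simp [inv_def, zero_def]
    exists_pair_ne := ⟨0, 1, by decide⟩
    nnqsmul := _
    qsmul := _ }

lemma sub_def (x y : GF25) : x - y = ⟨x.a - y.a, x.b - y.b⟩ := by
  rw [sub_eq_add_neg, sub_eq_add_neg, sub_eq_add_neg]
  rfl

/-- The prime field embedding. -/
def φ : ZMod 5 →+* GF25 where
  toFun n := ⟨n, 0⟩
  map_one' := by decide
  map_mul' := by decide
  map_zero' := by decide
  map_add' := by decide

instance : CharP GF25 5 :=
  charP_of_injective_ringHom (f := φ) (by decide) 5

/-- The coordinate equivalence with `ZMod 5 × ZMod 5`. -/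
def coords : GF25 ≃ ZMod 5 × ZMod 5 where
  toFun x := (x.a, x.b)
  invFun p := ⟨p.1, p.2⟩
  left_inv _ := rfl
  right_inv _ := rfl

lemma card_GF25 : Fintype.card GF25 = 25 := by
  rw [Fintype.card_congr coords]; simp

set_option maxHeartbeats 4000000 in
/-- The nonzero cubes of `GF25` are exactly the two punctured coordinate axes. -/
lemma cube_iff : ∀ w : GF25, (∃ z : GF25, z ≠ 0 ∧ w = z ^ 3) ↔
    ((w.a = 0 ∧ w.b ≠ 0) ∨ (w.a ≠ 0 ∧ w.b = 0)) := by decide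

lemma core (x y : GF25) : vlsAdj x y ↔ hammingAdj (coords x) (coords y) := by
  unfold vlsAdj hammingAdj
  rw [cube_iff]
  simp only [coords, Equiv.coe_fn_mk, ne_eq, Prod.mk.injEq, not_and, GF25.ext_iff,
    sub_def, sub_eq_zero, sub_ne_zero]

end GF25

lemma vlsAdj_map {F K : Type*} [Field F] [Field K] (i : F ≃+* K) (x y : F) :
    vlsAdj x y → vlsAdj (i x) (i y) := by
  rintro ⟨hxy, z, hz, hcube⟩
  refine ⟨fun h => hxy (i.injective h), i z,
    fun h => hz (by simpa using i.injective (by simpa using h)), ?_⟩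
  rw [← map_sub, hcube, map_pow]

lemma vlsAdj_map_iff {F K : Type*} [Field F] [Field K] (i : F ≃+* K) (x y : F) :
    vlsAdj x y ↔ vlsAdj (i x) (i y) := by
  refine ⟨vlsAdj_map i x y, fun h => ?_⟩
  have := vlsAdj_map i.symm (i x) (i y) h
  simpa using this

lemma hammingAdj_map_iff {Δ Δ' : Type*} (g : Δ ≃ Δ') (u v : Δ × Δ) :
    hammingAdj u v ↔ hammingAdj ((Equiv.prodCongr g g) u) ((Equiv.prodCongr g g) v) := by
  unfold hammingAdj
  simp [Prod.ext_iff, Equiv.prodCongr, g.injective.ne_iff, g.injective.eq_iff]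

/-- The Van Lint–Schrijver graph on `GF(25)` is isomorphic to the
`5 × 5` rook's graph `H(2,5)`. -/
theorem vls25_iso_rook
    (F : Type*) [Field F] [Fintype F] (hF : Fintype.card F = 25)
    (Δ : Type*) [Fintype Δ] (hΔ : Fintype.card Δ = 5) :
    ∃ e : F ≃ Δ × Δ, ∀ x y : F, vlsAdj x y ↔ hammingAdj (e x) (e y) := by
  -- F has characteristic 5
  have hp : CharP F (ringChar F) := ringChar.charP F
  have hprime : (ringChar F).Prime := CharP.char_is_prime F (ringChar F)
  obtain ⟨n, hn⟩ := FiniteField.card F (ringChar F)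
  have h5 : ringChar F = 5 := by
    have hdvd : ringChar F ∣ 25 := by
      rw [← hF, hn.2]
      exact dvd_pow_self _ (by positivity)
    have h2 : ringChar F ∣ 5 ^ 2 := by norm_num at hdvd ⊢; exact hdvd
    have h3 := hprime.dvd_of_dvd_pow h2
    exact (Nat.prime_dvd_prime_iff_eq hprime (by norm_num)).mp h3
  haveI : CharP F 5 := ringChar.of_eq h5
  letI : Algebra (ZMod 5) F := ZMod.algebra F 5
  letI : Algebra (ZMod 5) GF25 := ZMod.algebra GF25 5
  let i : F ≃ₐ[ZMod 5] GF25 :=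
    FiniteField.algEquivOfCardEq 5 (by rw [hF, GF25.card_GF25])
  let d : Δ ≃ ZMod 5 := Fintype.equivOfCardEq (by simp [hΔ])
  refine ⟨i.toEquiv.trans (GF25.coords.trans (Equiv.prodCongr d.symm d.symm)), fun x y => ?_⟩
  rw [vlsAdj_map_iff i.toRingEquiv x y, GF25.core, hammingAdj_map_iff d.symm]
  rfl
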